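/- arXiv:2003.03791 — 3 statements merged into one kernel-verified Lean document; each statement's English description precedes it below -/
import Mathlib

section
/- For all integers n ≥ 7 and t ≥ ⌈n/2⌉ − 2, the eternal cop number of the cycle on n vertices satisfies c_t^∞(C_n) = 2. -/
open SimpleGraph

/-- `c'` is a one-step move of the `k` cops from configuration `c` in `G`:
each cop stays put or moves to an adjacent vertex. -/
def OneStepMove {V : Type*} (G : SimpleGraph V) {k : ℕ} (c c' : Fin k → V) : Prop :=
  ∀ i, c' i = c i ∨ G.Adj (c i) (c' i)

/-- The capture predicate `Cap G T s c r`: from cop configuration `c`, with the robber at `r`,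
the cops can capture the robber within `s` time-steps, ending in a configuration in `T`. -/
def Cap {V : Type*} (G : SimpleGraph V) {k : ℕ} (T : Set (Fin k → V)) :
    ℕ → (Fin k → V) → V → Prop
  | 0, _, _ => False
  | s + 1, c, r => ∃ c', OneStepMove G c c' ∧
      (((∃ i, c' i = r) ∧ c' ∈ T) ∨
        ∀ r', (r' = r ∨ G.Adj r r') →
          (((∃ i, c' i = r') ∧ c' ∈ T) ∨ Cap G T s c' r'))

/-- `k` cops can win a single play on `G` within `t` time-steps. -/
def TimedWin {V : Type*} (G : SimpleGraph V) (k t : ℕ) : Prop :=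
  ∃ c : Fin k → V, ∀ r : V,
    (∃ i, c i = r) ∨ Cap G (Set.univ : Set (Fin k → V)) t c r

/-- The `t`-capture cop number `c_t(G)`. -/
noncomputable def captureCopNumber {V : Type*} (G : SimpleGraph V) (t : ℕ) : ℕ :=
  sInf {k | 1 ≤ k ∧ TimedWin G k t}

/-- `k` cops can win the eternal game on `G`, capturing each robber within `t` time-steps. -/
def EternalWin {V : Type*} (G : SimpleGraph V) (k t : ℕ) : Prop :=
  ∃ T : Set (Fin k → V), T.Nonempty ∧
    ∀ c ∈ T, ∀ r : V, (∃ i, c i = r) ∨ Cap G T t c r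

/-- The eternal cop number `c_t^∞(G)`. -/
noncomputable def eternalCopNumber {V : Type*} (G : SimpleGraph V) (t : ℕ) : ℕ :=
  sInf {k | 1 ≤ k ∧ EternalWin G k t}

/-- The cop number `c(G)`. -/
noncomputable def copNumber {V : Type*} (G : SimpleGraph V) : ℕ :=
  sInf {k | ∃ t, 1 ≤ t ∧ captureCopNumber G t ≤ k}

/-- `ℓ_i = ⌈(1 - 2^{-i}) t - 1/2⌉`. -/
def ell (t i : ℕ) : ℕ :=
  (⌈((1 : ℚ) - 2 ^ (-(i : ℤ))) * (t : ℚ) - 1 / 2⌉).toNat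

/-- The subgraph of `G` induced by `W` is a retract of `G`. -/
def IsRetract {V : Type*} (G : SimpleGraph V) (W : Set V) : Prop :=
  ∃ f : V → V, (∀ v, f v ∈ W) ∧ (∀ w ∈ W, f w = w) ∧
    ∀ u v, G.Adj u v → f u = f v ∨ G.Adj (f u) (f v)

/-- The radius of a graph. -/
noncomputable def graphRadius {V : Type*} (G : SimpleGraph V) : ℕ :=
  sInf {r | ∃ v, ∀ u, G.dist v u ≤ r}

/-!
Two cops keep each arc between them of length at least three. A robber then sits inside an arc
of length `g ≤ n - 3`, and the cops squeeze it from both ends: an odd gap shrinks by two and an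
even gap by one, so it never drops below three, and the robber is caught after at most
`⌊g / 2⌋ ≤ ⌊(n - 3) / 2⌋ = ⌈n / 2⌉ - 2` steps with the cops again spaced. A single cop never
catches a robber who starts at distance two and steps away whenever the cop comes adjacent.
-/

open Fin.CommRing

section Game

variable {V : Type*} {G : SimpleGraph V} {k : ℕ} {T : Set (Fin k → V)}

theorem Cap.comp_perm {σ : Equiv.Perm (Fin k)} (hT : ∀ c ∈ T, c ∘ σ ∈ T) :
    ∀ {s c r}, Cap G T s c r → Cap G T s (c ∘ σ) r := by
  have caught {c : Fin k → V} {r : V} (h : (∃ i, c i = r) ∧ c ∈ T) :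
      (∃ i, (c ∘ σ) i = r) ∧ c ∘ σ ∈ T :=
    ⟨h.1.imp' σ.symm fun i hi => by simpa using hi, hT c h.2⟩
  intro s
  induction s with
  | zero => exact fun h => h
  | succ s ih =>
    rintro c r ⟨c', hmove, hcap⟩
    refine ⟨c' ∘ σ, fun i => hmove (σ i), hcap.imp caught fun h r' hr' => ?_⟩
    exact (h r' hr').imp caught ih

def IsEvasionInvariant (G : SimpleGraph V) (Safe : (Fin k → V) → V → Prop) : Prop :=
  ∀ c r, Safe c r → (∀ i, c i ≠ r) ∧ ∀ c', OneStepMove G c c' →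
    (∀ i, c' i ≠ r) ∧ ∃ r', (r' = r ∨ G.Adj r r') ∧ Safe c' r'

theorem IsEvasionInvariant.not_cap {Safe : (Fin k → V) → V → Prop}
    (hSafe : IsEvasionInvariant G Safe) : ∀ {s c r}, Safe c r → ¬ Cap G T s c r := by
  intro s
  induction s with
  | zero => exact fun _ h => h
  | succ s ih =>
    rintro c r hsafe ⟨c', hmove, hcap⟩
    obtain ⟨hr, r', hr', hsafe'⟩ := (hSafe c r hsafe).2 c' hmove
    rcases hcap with ⟨⟨i, hi⟩, -⟩ | hcap
    · exact hr i hi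
    · rcases hcap r' hr' with ⟨⟨i, hi⟩, -⟩ | hcap'
      · exact (hSafe c' r' hsafe').1 i hi
      · exact ih hsafe' hcap'

theorem IsEvasionInvariant.not_eternalWin {Safe : (Fin k → V) → V → Prop} {t : ℕ}
    (hSafe : IsEvasionInvariant G Safe) (hstart : ∀ c, ∃ r, Safe c r) :
    ¬ EternalWin G k t := by
  rintro ⟨T, ⟨c, hc⟩, hwin⟩
  obtain ⟨r, hsafe⟩ := hstart c
  rcases hwin c hc r with ⟨i, hi⟩ | hcap
  · exact (hSafe c r hsafe).1 i hi
  · exact hSafe.not_cap hsafe hcap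

theorem eternalCopNumber_eq_of_eternalWin {t : ℕ} (hk : 1 ≤ k) (hwin : EternalWin G k t)
    (hlt : ∀ j, 1 ≤ j → j < k → ¬ EternalWin G j t) : eternalCopNumber G t = k :=
  IsLeast.csInf_eq ⟨⟨hk, hwin⟩, fun j ⟨hj, hwin'⟩ => not_lt.1 fun h => hlt j hj h hwin'⟩

end Game

namespace Fin

variable {n : ℕ} [NeZero n]

theorem add_intCast_ne_self (a : Fin n) {j : ℤ} (h0 : 0 < j) (hn : j < n) : a + j ≠ a := by
  intro h
  have := congrArg Fin.val (add_eq_left.1 h)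
  rw [val_intCast, Int.emod_eq_of_lt h0.le hn, val_zero] at this
  omega

theorem exists_eq_add_intCast (a r : Fin n) : ∃ j : ℤ, 0 ≤ j ∧ j < n ∧ r = a + j :=
  ⟨(r - a).val, by omega, by omega, by simp⟩

end Fin

namespace SimpleGraph

variable {n : ℕ} [NeZero n]

theorem cycleGraph_adj_iff (hn : 2 ≤ n) {u v : Fin n} :
    (cycleGraph n).Adj u v ↔ v = u + 1 ∨ v = u - 1 := by
  obtain ⟨m, rfl⟩ : ∃ m, n = m + 2 := ⟨n - 2, by omega⟩
  rw [cycleGraph_adj, sub_eq_iff_eq_add', eq_sub_iff_add_eq, sub_eq_iff_eq_add', or_comm,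
    add_comm v 1, add_comm u 1]
  exact or_congr Iff.rfl eq_comm

theorem cycleGraph_eq_or_adj_add_intCast (hn : 2 ≤ n) (u : Fin n) {δ : ℤ} (h1 : -1 ≤ δ)
    (h2 : δ ≤ 1) : u + δ = u ∨ (cycleGraph n).Adj u (u + δ) := by
  rw [cycleGraph_adj_iff hn]
  rcases (show δ = 0 ∨ δ = 1 ∨ δ = -1 by omega) with rfl | rfl | rfl <;>
    simp [sub_eq_add_neg]

theorem cycleGraph_exists_eq_add_intCast (hn : 2 ≤ n) {u v : Fin n}
    (h : v = u ∨ (cycleGraph n).Adj u v) : ∃ δ : ℤ, -1 ≤ δ ∧ δ ≤ 1 ∧ v = u + δ := by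
  rw [cycleGraph_adj_iff hn] at h
  rcases h with rfl | rfl | rfl
  · exact ⟨0, by simp⟩
  · exact ⟨1, by simp⟩
  · exact ⟨-1, by simp [sub_eq_add_neg]⟩

theorem cycleGraph_oneStepMove_add_intCast (hn : 2 ≤ n) {k : ℕ} (c : Fin k → Fin n)
    (δ : Fin k → ℤ) (hδ : ∀ i, -1 ≤ δ i ∧ δ i ≤ 1) :
    OneStepMove (cycleGraph n) c (fun i => c i + δ i) :=
  fun i => cycleGraph_eq_or_adj_add_intCast hn (c i) (hδ i).1 (hδ i).2

def spacedPairs (n : ℕ) [NeZero n] : Set (Fin 2 → Fin n) :=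
  {c | ∃ g : ℤ, 3 ≤ g ∧ g + 3 ≤ n ∧ c 1 = c 0 + g}

theorem comp_swap_mem_spacedPairs {c : Fin 2 → Fin n} (hc : c ∈ spacedPairs n) :
    c ∘ Equiv.swap 0 1 ∈ spacedPairs n := by
  obtain ⟨g, hg, hgn, h⟩ := hc
  refine ⟨n - g, by omega, by omega, ?_⟩
  simp [h]

theorem cycleGraph_cap_of_between {s : ℕ} :
    ∀ {c : Fin 2 → Fin n} {g j : ℤ}, c 1 = c 0 + g → 3 ≤ g → g + 3 ≤ n → 0 < j → j < g →
      g ≤ 2 * s + 1 → Cap (cycleGraph n) (spacedPairs n) s c (c 0 + j) := by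
  induction s with
  | zero => intro c g j _ hg _ hj hjg hs; omega
  | succ s ih =>
    intro c g j hc hg hgn hj hjg hs
    have hn : 2 ≤ n := by omega
    rcases (show j = 1 ∨ j = g - 1 ∨ (2 ≤ j ∧ j ≤ g - 2) by omega)
      with rfl | rfl | ⟨hj2, hjg2⟩
    · refine ⟨_, cycleGraph_oneStepMove_add_intCast hn c (fun _ => 1) (by simp),
        Or.inl ⟨⟨0, by simp⟩, g, hg, hgn, ?_⟩⟩
      simp only [hc, Int.cast_one]; ring
    · refine ⟨_, cycleGraph_oneStepMove_add_intCast hn c (fun _ => -1) (by simp),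
        Or.inl ⟨⟨1, ?_⟩, g, hg, hgn, ?_⟩⟩
      · simp only [hc]; push_cast; ring
      · simp only [hc]; ring
    · -- an even gap shrinks by one, an odd gap by two
      set g' := g - 1 - g % 2
      let δ : Fin 2 → ℤ := ![1, -(g % 2)]
      have hc' : c 1 + δ 1 = (c 0 + δ 0) + g' := by
        show c 1 + ((-(g % 2) : ℤ) : Fin n) =
          c 0 + ((1 : ℤ) : Fin n) + ((g - 1 - g % 2 : ℤ) : Fin n)
        rw [hc]; push_cast; ring
      refine ⟨_, cycleGraph_oneStepMove_add_intCast hn c δ ?_, Or.inr fun r' hr' => ?_⟩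
      · exact Fin.forall_fin_two.2 ⟨by norm_num [δ], show -1 ≤ -(g % 2) ∧ -(g % 2) ≤ 1 by omega⟩
      obtain ⟨ε, hε1, hε2, rfl⟩ := cycleGraph_exists_eq_add_intCast hn hr'
      have hr : c 0 + j + ε = (c 0 + δ 0) + (j + ε - 1 : ℤ) := by
        show _ = c 0 + ((1 : ℤ) : Fin n) + _
        push_cast; ring
      rw [hr]
      rcases (show j + ε - 1 = 0 ∨ j + ε - 1 = g' ∨ (0 < j + ε - 1 ∧ j + ε - 1 < g') by omega)
        with h | h | ⟨h0, hg'⟩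
      · exact Or.inl ⟨⟨0, by simp [h]⟩, g', by omega, by omega, hc'⟩
      · exact Or.inl ⟨⟨1, by simp only [h]; exact hc'⟩, g', by omega, by omega, hc'⟩
      · exact Or.inr (ih hc' (by omega) (by omega) h0 hg' (by omega))

theorem cycleGraph_eternalWin_two {t : ℕ} (hn : 6 ≤ n) (ht : n ≤ 2 * t + 4) :
    EternalWin (cycleGraph n) 2 t := by
  refine ⟨spacedPairs n, ⟨![0, 3], 3, le_rfl, by omega, by simp⟩, fun c hc r => ?_⟩
  obtain ⟨g, hg, hgn, hc1⟩ := id hc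
  obtain ⟨j, hj0, hjn, rfl⟩ := Fin.exists_eq_add_intCast (c 0) r
  rcases (show j = 0 ∨ (0 < j ∧ j < g) ∨ j = g ∨ g < j by omega)
    with rfl | ⟨hj, hjg⟩ | rfl | hgj
  · exact Or.inl ⟨0, by simp⟩
  · exact Or.inr (cycleGraph_cap_of_between hc1 hg hgn hj hjg (by omega))
  · exact Or.inl ⟨1, hc1⟩
  · -- the robber is in the arc from `c 1` to `c 0`: swap the cops' roles
    have hcap := cycleGraph_cap_of_between (s := t) (c := c ∘ Equiv.swap 0 1) (g := n - g)
      (j := j - g) (by simp [hc1]) (by omega) (by omega) (by omega) (by omega) (by omega)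
    have hσ : (c ∘ Equiv.swap 0 1) ∘ Equiv.swap 0 1 = c := funext fun i => by simp
    have hr : (c ∘ Equiv.swap 0 1) 0 + (j - g : ℤ) = c 0 + j := by simp [hc1]
    have := Cap.comp_perm (fun _ => comp_swap_mem_spacedPairs) hcap
    rw [hσ, hr] at this
    exact Or.inr this

theorem cycleGraph_not_eternalWin_one {t : ℕ} (hn : 5 ≤ n) :
    ¬ EternalWin (cycleGraph n) 1 t := by
  refine IsEvasionInvariant.not_eternalWin
    (Safe := fun (c : Fin 1 → Fin n) r => ∃ j : ℤ, 2 ≤ j ∧ j + 2 ≤ n ∧ r = c 0 + j) ?_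
    (fun c => ⟨c 0 + (2 : ℤ), 2, le_rfl, by omega, rfl⟩)
  rintro c _ ⟨j, hj, hjn, rfl⟩
  refine ⟨fun i => ?_, fun c' hmove => ?_⟩
  · rw [Subsingleton.elim i 0]
    exact (Fin.add_intCast_ne_self _ (by omega) (by omega)).symm
  obtain ⟨δ, hδ1, hδ2, hδ⟩ := cycleGraph_exists_eq_add_intCast (by omega) (hmove 0)
  have hr : c 0 + j = c' 0 + (j - δ : ℤ) := by rw [hδ]; push_cast; ring
  refine ⟨fun i => ?_, ?_⟩
  · rw [Subsingleton.elim i 0, hr]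
    exact (Fin.add_intCast_ne_self _ (by omega) (by omega)).symm
  obtain ⟨ε, hε1, hε2, hε⟩ : ∃ ε : ℤ, -1 ≤ ε ∧ ε ≤ 1 ∧ 2 ≤ j - δ + ε ∧ j - δ + ε + 2 ≤ n := by
    rcases (show j - δ = 1 ∨ j - δ + 1 = n ∨ (2 ≤ j - δ ∧ j - δ + 2 ≤ n) by omega)
      with h | h | h
    · exact ⟨1, by omega⟩
    · exact ⟨-1, by omega⟩
    · exact ⟨0, by omega⟩
  refine ⟨c 0 + j + ε, cycleGraph_eq_or_adj_add_intCast (by omega) _ hε1 hε2,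
    j - δ + ε, hε.1, hε.2, ?_⟩
  rw [hr]; push_cast; ring

end SimpleGraph

theorem eternalCopNumber_cycle_large_t_general (n t : ℕ) (hn : 7 ≤ n)
    (ht : ⌈(n : ℚ) / 2⌉ - 2 ≤ (t : ℤ)) :
    eternalCopNumber (SimpleGraph.cycleGraph n) t = 2 := by
  have : NeZero n := ⟨by omega⟩
  have hnt : n ≤ 2 * t + 4 := by
    have h : (n : ℚ) / 2 ≤ ((t + 2 : ℤ) : ℚ) := Int.ceil_le.1 (by omega)
    push_cast at h
    exact_mod_cast (by linarith : (n : ℚ) ≤ 2 * t + 4)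
  refine eternalCopNumber_eq_of_eternalWin (by norm_num)
    (cycleGraph_eternalWin_two (by omega) hnt) fun j hj hj2 => ?_
  obtain rfl : j = 1 := by omega
  exact cycleGraph_not_eternalWin_one (by omega)

/-- for `n ≥ 7` and `t ≥ ⌈n/2⌉ − 2`, `c_t^∞(C_n) = 2`. -/
theorem eternalCopNumber_cycle_large_t (n t : ℕ) (hn : 7 ≤ n) (ht1 : 1 ≤ t)
    (ht : ⌈(n : ℚ) / 2⌉ - 2 ≤ (t : ℤ)) :
    eternalCopNumber (SimpleGraph.cycleGraph n) t = 2 :=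
  eternalCopNumber_cycle_large_t_general n t hn ht
end

section
/- For all integers t, i, k ≥ 1 and every finite nonempty simple graph G with c_{ℓ_i}(G) ≤ k, we have c_t^∞(G) ≤ i·k. -/
open SimpleGraph

/- ### Auxiliary machinery -/

lemma ell_le_self (t i : ℕ) : ell t i ≤ t := by
  have hp : 0 < (2:ℚ) ^ (-(i : ℤ)) := by positivity
  have ht0 : (0:ℚ) ≤ (t:ℚ) := Nat.cast_nonneg t
  have hq : ((1:ℚ) - 2 ^ (-(i : ℤ))) * (t : ℚ) - 1/2 ≤ ((t:ℤ) : ℚ) := by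
    push_cast
    nlinarith
  have hz : (⌈((1:ℚ) - 2 ^ (-(i : ℤ))) * (t : ℚ) - 1/2⌉ : ℤ) ≤ (t : ℤ) :=
    Int.ceil_le.mpr hq
  unfold ell
  omega

lemma two_ell_one_le (t : ℕ) : 2 * ell t 1 ≤ t := by
  have hq : ((1:ℚ) - 2 ^ (-((1:ℕ) : ℤ))) * (t : ℚ) - 1/2 = (t:ℚ)/2 - 1/2 := by
    norm_num
    ring
  have h1 : (((⌈(t:ℚ)/2 - 1/2⌉ : ℤ)) : ℚ) < ((t:ℚ)/2 - 1/2) + 1 :=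
    Int.ceil_lt_add_one _
  have h2 : (2 * (⌈(t:ℚ)/2 - 1/2⌉ : ℤ)) < (t : ℤ) + 1 := by
    have : ((2 * (⌈(t:ℚ)/2 - 1/2⌉ : ℤ) : ℤ) : ℚ) < (((t:ℤ) + 1 : ℤ) : ℚ) := by
      push_cast
      linarith
    exact_mod_cast this
  unfold ell
  rw [hq]
  omega

section aux
variable {V : Type*} (G : SimpleGraph V)

lemma oneStep_refl {k : ℕ} (c : Fin k → V) : OneStepMove G c c := fun _ => Or.inl rfl

lemma oneStep_symm {k : ℕ} {c d : Fin k → V} (h : OneStepMove G c d) : OneStepMove G d c := by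
  intro i
  rcases h i with h' | h'
  · exact Or.inl h'.symm
  · exact Or.inr h'.symm

def Reach {k : ℕ} (c₀ : Fin k → V) : ℕ → (Fin k → V) → Prop
  | 0, c => c = c₀
  | n+1, c => ∃ d, Reach c₀ n d ∧ OneStepMove G d c

def HomeIn {k : ℕ} (c₀ : Fin k → V) : ℕ → (Fin k → V) → Prop
  | 0, c => c = c₀
  | n+1, c => ∃ d, OneStepMove G c d ∧ HomeIn c₀ n d

lemma reach_refl {k} (c₀ : Fin k → V) : ∀ n, Reach G c₀ n c₀
  | 0 => rfl
  | n+1 => ⟨c₀, reach_refl c₀ n, oneStep_refl G c₀⟩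

lemma reach_homeIn {k} (c₀ : Fin k → V) : ∀ n c, Reach G c₀ n c → HomeIn G c₀ n c
  | 0, _, h => h
  | n+1, _, ⟨d, hd, mv⟩ => ⟨d, oneStep_symm G mv, reach_homeIn c₀ n d hd⟩

lemma cap_zero' {k} (T : Set (Fin k → V)) (c : Fin k → V) (r : V) : ¬ Cap G T 0 c r :=
  fun h => h

lemma cap_succ {k} (T : Set (Fin k → V)) (s : ℕ) (c : Fin k → V) (r : V) :
    Cap G T (s+1) c r ↔ ∃ c', OneStepMove G c c' ∧
      (((∃ i, c' i = r) ∧ c' ∈ T) ∨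
        ∀ r', (r' = r ∨ G.Adj r r') →
          (((∃ i, c' i = r') ∧ c' ∈ T) ∨ Cap G T s c' r')) := Iff.rfl

end aux


section transfer
variable {V : Type*} (G : SimpleGraph V)

lemma cap_mono_T {k} {T T' : Set (Fin k → V)} (hT : T ⊆ T') :
    ∀ s c r, Cap G T s c r → Cap G T' s c r := by
  intro s
  induction s with
  | zero => intro c r h; exact h.elim
  | succ s ih =>
    rintro c r ⟨c', mv, hc⟩
    refine ⟨c', mv, ?_⟩
    rcases hc with ⟨hcap, hmem⟩ | hall
    · exact Or.inl ⟨hcap, hT hmem⟩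
    · refine Or.inr fun r' hr' => ?_
      rcases hall r' hr' with ⟨hcap, hmem⟩ | hcap
      · exact Or.inl ⟨hcap, hT hmem⟩
      · exact Or.inr (ih c' r' hcap)

lemma cap_comp {k k' : ℕ} (g : Fin k' → Fin k) (e : Fin k → Fin k')
    (hge : ∀ y, g (e y) = y) (T : Set (Fin k → V)) :
    ∀ s c r, Cap G T s c r → Cap G ((fun c => c ∘ g) '' T) s (c ∘ g) r := by
  intro s
  induction s with
  | zero => intro c r h; exact h.elim
  | succ s ih =>
    rintro c r ⟨c', mv, hc⟩
    refine ⟨c' ∘ g, fun i => mv (g i), ?_⟩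
    rcases hc with ⟨⟨j, hj⟩, hmem⟩ | hall
    · exact Or.inl ⟨⟨e j, by simp [Function.comp, hge, hj]⟩, ⟨c', hmem, rfl⟩⟩
    · refine Or.inr fun r' hr' => ?_
      rcases hall r' hr' with ⟨⟨j, hj⟩, hmem⟩ | hcap
      · exact Or.inl ⟨⟨e j, by simp [Function.comp, hge, hj]⟩, ⟨c', hmem, rfl⟩⟩
      · exact Or.inr (ih c' r' hcap)

/-- a section pair `Fin k → Fin k'` when `1 ≤ k ≤ k'` -/
lemma exists_section {k k' : ℕ} (hk : 1 ≤ k) (hkk : k ≤ k') :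
    ∃ (g : Fin k' → Fin k) (e : Fin k → Fin k'), ∀ y, g (e y) = y := by
  refine ⟨fun x => if h : (x : ℕ) < k then ⟨x, h⟩ else ⟨0, hk⟩,
    fun y => ⟨y, lt_of_lt_of_le y.isLt hkk⟩, fun y => ?_⟩
  simp [y.isLt]

lemma timedWin_mono {k k' t : ℕ} (hk : 1 ≤ k) (hkk : k ≤ k')
    (h : TimedWin G k t) : TimedWin G k' t := by
  obtain ⟨g, e, hge⟩ := exists_section hk hkk
  obtain ⟨c, hc⟩ := h
  refine ⟨c ∘ g, fun r => ?_⟩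
  rcases hc r with ⟨j, hj⟩ | hcap
  · exact Or.inl ⟨e j, by simp [Function.comp, hge, hj]⟩
  · exact Or.inr (cap_mono_T G (Set.subset_univ _) _ _ _
      (cap_comp G g e hge _ t c r hcap))

lemma eternalWin_mono {k k' t : ℕ} (hk : 1 ≤ k) (hkk : k ≤ k')
    (h : EternalWin G k t) : EternalWin G k' t := by
  obtain ⟨g, e, hge⟩ := exists_section hk hkk
  obtain ⟨T, ⟨c₀, hc₀⟩, hT⟩ := h
  refine ⟨(fun c => c ∘ g) '' T, ⟨c₀ ∘ g, ⟨c₀, hc₀, rfl⟩⟩, ?_⟩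
  rintro _ ⟨c, hcT, rfl⟩ r
  rcases hT c hcT r with ⟨j, hj⟩ | hcap
  · exact Or.inl ⟨e j, by simp [Function.comp, hge, hj]⟩
  · exact Or.inr (cap_comp G g e hge T t c r hcap)

lemma timedWin_card [Fintype V] [Nonempty V] (t : ℕ) :
    TimedWin G (Fintype.card V) t := by
  refine ⟨(Fintype.equivFin V).symm, fun r => Or.inl ⟨Fintype.equivFin V r, by simp⟩⟩

end transfer


section oneteam
variable {V : Type*} (G : SimpleGraph V) {k ℓ : ℕ} (c₀ : Fin k → V)
  (htw : ∀ r : V, (∃ j, c₀ j = r) ∨ Cap G (Set.univ : Set (Fin k → V)) ℓ c₀ r)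

/-- Configurations at distance at most `ℓ` from home. -/
def Tone (G : SimpleGraph V) (c₀ : Fin k → V) (ℓ : ℕ) : Set (Fin k → V) :=
  {C | ∃ p, p ≤ ℓ ∧ Reach G c₀ p C}

lemma chase1 : ∀ su s n (e : Fin k → V) (r : V),
    Cap G (Set.univ : Set (Fin k → V)) su e r → Reach G c₀ n e →
    n + su ≤ ℓ → su ≤ s → Cap G (Tone G c₀ ℓ) s e r := by
  intro su
  induction su with
  | zero => intro s n e r h _ _ _; exact h.elim
  | succ q ih =>
    intro s n e r h hre hnl hss
    obtain ⟨s', rfl⟩ : ∃ s', s = s' + 1 := ⟨s - 1, by omega⟩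
    obtain ⟨e', emv, hc⟩ := h
    have hre' : Reach G c₀ (n+1) e' := ⟨e, hre, emv⟩
    refine ⟨e', emv, ?_⟩
    rcases hc with ⟨⟨j, hj⟩, -⟩ | hall
    · exact Or.inl ⟨⟨j, hj⟩, ⟨n+1, by omega, hre'⟩⟩
    · refine Or.inr fun r' hr' => ?_
      rcases hall r' hr' with ⟨⟨j, hj⟩, -⟩ | hcap
      · exact Or.inl ⟨⟨j, hj⟩, ⟨n+1, by omega, hre'⟩⟩
      · exact Or.inr (ih s' (n+1) e' r' hcap hre' (by omega) (by omega))

include htw in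
lemma home1 : ∀ p s (C : Fin k → V) (r : V),
    HomeIn G c₀ p C → p ≤ ℓ → p + ℓ ≤ s → 1 ≤ s → Cap G (Tone G c₀ ℓ) s C r := by
  intro p
  induction p with
  | zero =>
    intro s C r hC _ hls h1s
    obtain ⟨s', rfl⟩ : ∃ s', s = s' + 1 := ⟨s - 1, by omega⟩
    rw [show C = c₀ from hC]
    rcases htw r with ⟨j, hj⟩ | hcap
    · exact ⟨c₀, oneStep_refl G c₀, Or.inl ⟨⟨j, hj⟩, ⟨0, Nat.zero_le _, rfl⟩⟩⟩
    · exact chase1 G c₀ ℓ (s'+1) 0 c₀ r hcap rfl (by omega) (by omega)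
  | succ p' ih =>
    intro s C r hC hpl hls h1s
    obtain ⟨C', mv, hh⟩ := hC
    obtain ⟨s', rfl⟩ : ∃ s', s = s' + 1 := ⟨s - 1, by omega⟩
    refine ⟨C', mv, Or.inr fun r' _ => Or.inr ?_⟩
    exact ih s' C' r' hh (by omega) (by omega) (by omega)

include c₀ htw in
lemma eternalWin_oneteam (t : ℕ) (h2l : 2 * ℓ ≤ t) (h1t : 1 ≤ t) :
    EternalWin G k t := by
  refine ⟨Tone G c₀ ℓ, ⟨c₀, 0, Nat.zero_le _, rfl⟩, ?_⟩
  rintro C ⟨p, hp, hre⟩ r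
  exact Or.inr (home1 G c₀ htw p t C r (reach_homeIn G c₀ p C hre) hp (by omega) h1t)

end oneteam


section twoteam
variable {V : Type*} (G : SimpleGraph V) {k ℓ t : ℕ} (c₀ : Fin k → V)

lemma fin2_add_one_ne (a : Fin 2) : a + 1 ≠ a := by revert a; decide

lemma fin2_eq_of_ne (u v : Fin 2) (h : u ≠ v + 1) : u = v := by revert u v; decide

/-- Two-team configuration: team `b` at `e`, the other team at `D`. -/
def mix (b : Fin 2) (e D : Fin k → V) : Fin (2*k) → V :=
  fun x => if (finProdFinEquiv.symm x).1 = b then e (finProdFinEquiv.symm x).2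
           else D (finProdFinEquiv.symm x).2

lemma mix_same (b : Fin 2) (e D : Fin k → V) (j : Fin k) :
    mix b e D (finProdFinEquiv (b, j)) = e j := by simp [mix]

lemma mix_other {b b' : Fin 2} (h : b' ≠ b) (e D : Fin k → V) (j : Fin k) :
    mix b e D (finProdFinEquiv (b', j)) = D j := by simp [mix, h]

lemma mix_move {b : Fin 2} {e e' D D' : Fin k → V} (he : OneStepMove G e e')
    (hD : OneStepMove G D D') : OneStepMove G (mix b e D) (mix b e' D') := by
  intro x
  unfold mix
  by_cases h : (finProdFinEquiv.symm x).1 = b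
  · simp only [h, if_pos]; exact he _
  · simp only [h, if_neg, ite_false]; exact hD _

/-- The eternal set: one team home at `c₀`, the other within `t` of home. -/
def Ttwo (G : SimpleGraph V) (c₀ : Fin k → V) (t : ℕ) : Set (Fin (2*k) → V) :=
  {C | ∃ a : Fin 2, Reach G c₀ t (fun j => C (finProdFinEquiv (a, j))) ∧
    ∀ j, C (finProdFinEquiv (a+1, j)) = c₀ j}

lemma mem_Ttwo (b : Fin 2) {e' D' : Fin k → V} (he : Reach G c₀ t e') (hD : D' = c₀) :
    mix b e' D' ∈ Ttwo G c₀ t := by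
  refine ⟨b, ?_, fun j => ?_⟩
  · have : (fun j => mix b e' D' (finProdFinEquiv (b, j))) = e' :=
      funext fun j => mix_same b e' D' j
    rw [this]; exact he
  · rw [mix_other (fin2_add_one_ne b) e' D' j, hD]

lemma shadow (b : Fin 2) : ∀ s m (e D : Fin k → V) (r : V),
    1 ≤ s → m + s = t → (∃ j, e j = r ∨ G.Adj (e j) r) → Reach G c₀ m e →
    HomeIn G c₀ s D → Cap G (Ttwo G c₀ t) s (mix b e D) r := by
  intro s
  induction s with
  | zero => intro m e D r h1; omega
  | succ s' ih =>
    rintro m e D r - hms ⟨j, hj⟩ hre hD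
    obtain ⟨D', Dmv, hD'⟩ := hD
    set e' := fun j' => if j' = j then r else e j' with he'def
    have hej : e' j = r := by simp [he'def]
    have emv : OneStepMove G e e' := by
      intro j'
      by_cases h : j' = j
      · subst h
        rcases hj with hj | hj
        · exact Or.inl (by simp [he'def, hj])
        · exact Or.inr (by simpa [he'def] using hj)
      · exact Or.inl (by simp [he'def, h])
    have hre' : Reach G c₀ (m+1) e' := ⟨e, hre, emv⟩
    refine ⟨mix b e' D', mix_move G emv Dmv, ?_⟩
    by_cases hs0 : s' = 0
    · subst hs0
      have hD0 : D' = c₀ := hD'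
      have hmt : m + 1 = t := by omega
      exact Or.inl ⟨⟨finProdFinEquiv (b, j), by rw [mix_same]; exact hej⟩,
        mem_Ttwo G c₀ b (hmt ▸ hre') hD0⟩
    · refine Or.inr fun r' hr' => Or.inr ?_
      refine ih (m+1) e' D' r' (by omega) (by omega) ⟨j, ?_⟩ hre' hD'
      rcases hr' with rfl | hadj
      · exact Or.inl hej
      · exact Or.inr (hej ▸ hadj)

lemma chase (b : Fin 2) : ∀ su s m (e D : Fin k → V) (r : V),
    Cap G (Set.univ : Set (Fin k → V)) su e r → su ≤ s → m + s = t →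
    Reach G c₀ m e → HomeIn G c₀ s D →
    Cap G (Ttwo G c₀ t) s (mix b e D) r := by
  intro su
  induction su with
  | zero => intro s m e D r h; exact h.elim
  | succ q ih =>
    intro s m e D r h hss hms hre hD
    obtain ⟨s', rfl⟩ : ∃ s', s = s' + 1 := ⟨s - 1, by omega⟩
    obtain ⟨e', emv, hc⟩ := h
    obtain ⟨D', Dmv, hD'⟩ := hD
    have hre' : Reach G c₀ (m+1) e' := ⟨e, hre, emv⟩
    refine ⟨mix b e' D', mix_move G emv Dmv, ?_⟩
    rcases hc with ⟨⟨j, hj⟩, -⟩ | hall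
    · by_cases hs0 : s' = 0
      · subst hs0
        exact Or.inl ⟨⟨finProdFinEquiv (b, j), by rw [mix_same]; exact hj⟩,
          mem_Ttwo G c₀ b ((by omega : m + 1 = t) ▸ hre') hD'⟩
      · refine Or.inr fun r' hr' => Or.inr ?_
        refine shadow G c₀ b s' (m+1) e' D' r' (by omega) (by omega) ⟨j, ?_⟩ hre' hD'
        rcases hr' with rfl | hadj
        · exact Or.inl hj
        · exact Or.inr (hj ▸ hadj)
    · refine Or.inr fun r' hr' => ?_
      rcases hall r' hr' with ⟨⟨j, hj⟩, -⟩ | hcap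
      · by_cases hs0 : s' = 0
        · subst hs0
          exact Or.inl ⟨⟨finProdFinEquiv (b, j), by rw [mix_same]; exact hj⟩,
            mem_Ttwo G c₀ b ((by omega : m + 1 = t) ▸ hre') hD'⟩
        · exact Or.inr (shadow G c₀ b s' (m+1) e' D' r' (by omega) (by omega)
            ⟨j, Or.inl hj⟩ hre' hD')
      · exact Or.inr (ih s' (m+1) e' D' r' hcap (by omega) (by omega) hre' hD')

include c₀ in
lemma eternalWin_twoteam
    (htw : ∀ r : V, (∃ j, c₀ j = r) ∨ Cap G (Set.univ : Set (Fin k → V)) ℓ c₀ r)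
    (hlt : ℓ ≤ t) (h1t : 1 ≤ t) : EternalWin G (2*k) t := by
  refine ⟨Ttwo G c₀ t, ⟨mix 0 c₀ c₀, mem_Ttwo G c₀ 0 (reach_refl G c₀ t) rfl⟩, ?_⟩
  rintro C ⟨a, hra, hca⟩ r
  rcases htw r with ⟨j, hj⟩ | hcap
  · exact Or.inl ⟨finProdFinEquiv (a+1, j), (hca j).trans hj⟩
  · refine Or.inr ?_
    have key : ∀ p : Fin 2 × Fin k,
        mix (a+1) c₀ (fun j => C (finProdFinEquiv (a, j))) (finProdFinEquiv p)
          = C (finProdFinEquiv p) := by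
      rintro ⟨u, j⟩
      by_cases h : u = a + 1
      · subst h
        rw [mix_same, ← hca j]
      · have hu : u = a := fin2_eq_of_ne _ _ h
        subst hu
        rw [mix_other h]
    have hmix : mix (a+1) c₀ (fun j => C (finProdFinEquiv (a, j))) = C := by
      funext x
      have := key (finProdFinEquiv.symm x)
      rwa [Equiv.apply_symm_apply] at this
    rw [← hmix]
    exact chase G c₀ (a+1) ℓ t 0 c₀ _ r hcap hlt (by omega) rfl
      (reach_homeIn G c₀ t _ hra)

end twoteam


/-- if `c_{ℓ_i}(G) ≤ k`, then `c_t^∞(G) ≤ i·k`. -/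
theorem eternalCopNumber_le_of_captureCopNumber_ell {V : Type*} [Fintype V] [Nonempty V]
    (G : SimpleGraph V) (t i k : ℕ) (ht : 1 ≤ t) (hi : 1 ≤ i) (hk : 1 ≤ k)
    (h : captureCopNumber G (ell t i) ≤ k) :
    eternalCopNumber G t ≤ i * k := by
  unfold captureCopNumber at h
  have hS : Fintype.card V ∈ {n | 1 ≤ n ∧ TimedWin G n (ell t i)} :=
    ⟨Fintype.card_pos, timedWin_card G (ell t i)⟩
  have hmem := Nat.sInf_mem (⟨_, hS⟩ : Set.Nonempty {n | 1 ≤ n ∧ TimedWin G n (ell t i)})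
  have htwk : TimedWin G k (ell t i) := timedWin_mono G hmem.1 h hmem.2
  obtain ⟨c₀, hc₀⟩ := htwk
  have hEW : EternalWin G (i * k) t := by
    rcases eq_or_lt_of_le hi with hi1 | hi2
    · subst hi1
      have e1 : EternalWin G k t :=
        eternalWin_oneteam G c₀ hc₀ t (two_ell_one_le t) ht
      exact eternalWin_mono G hk (by omega : k ≤ 1 * k) e1
    · have e2 : EternalWin G (2 * k) t :=
        eternalWin_twoteam G c₀ hc₀ (ell_le_self t i) ht
      exact eternalWin_mono G (by omega : 1 ≤ 2 * k)
        (Nat.mul_le_mul (by omega : 2 ≤ i) (le_refl k)) e2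
  have hmem2 : i * k ∈ {n | 1 ≤ n ∧ EternalWin G n t} :=
    ⟨Nat.one_le_iff_ne_zero.mpr (by positivity), hEW⟩
  unfold eternalCopNumber
  exact Nat.sInf_le hmem2
end

section
/- For all integers p ≥ 1, t ≥ 1 and n_1, …, n_p ≥ 1, the eternal cop number of the strong product of paths satisfies (∏_{i=1}^p n_i)/(2t+1)^p ≤ c_t^∞(P_{n_1} ⊠ ⋯ ⊠ P_{n_p}) ≤ ∏_{i=1}^p ⌈n_i/(t+1)⌉, where the lower bound is an inequality of rational numbers. -/
open SimpleGraph

/-- The strong product of a family of graphs. -/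
def strongProdPi {p : ℕ} {V : Fin p → Type*} (H : ∀ i, SimpleGraph (V i)) :
    SimpleGraph (∀ i, V i) where
  Adj x y := x ≠ y ∧ ∀ i, x i = y i ∨ (H i).Adj (x i) (y i)
  symm := by
    constructor
    rintro x y ⟨hne, h⟩
    exact ⟨hne.symm, fun i => (h i).imp Eq.symm SimpleGraph.Adj.symm⟩
  loopless := by
    constructor
    rintro x ⟨hne, -⟩
    exact hne rfl

/-!
Lower bound: for any configuration in the winning set, every vertex is within distance `t` of
some cop, and a ball of radius `t` in the strong product of paths has at most `(2t+1)^p`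
vertices, since adjacent vertices differ by at most one in each coordinate.

Upper bound: cut each path into consecutive blocks of `t + 1` vertices and put one cop in each
resulting box. Every cop stays in its box and steps, in each coordinate, towards the projection
of the robber onto its box. The potential `chasePotential` is at most `t` and drops by one each
round until it vanishes; once it is at most one, the cop of the robber's box steps onto the
robber.
-/

open Finset

namespace SimpleGraph

variable {V : Type*} {G : SimpleGraph V}

lemma Walk.apply_le_apply_add_length {f : V → ℕ} (hf : ∀ u v, G.Adj u v → f u ≤ f v + 1) :
    ∀ {u v : V} (w : G.Walk u v), f u ≤ f v + w.length
  | _, _, .nil => by simp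
  | _, _, .cons h w => by
    have := hf _ _ h
    have := w.apply_le_apply_add_length hf
    rw [Walk.length_cons]
    omega

lemma apply_le_apply_add_of_edist_le {f : V → ℕ} (hf : ∀ u v, G.Adj u v → f u ≤ f v + 1)
    {u v : V} {s : ℕ} (h : G.edist u v ≤ s) : f u ≤ f v + s := by
  obtain ⟨w, hw⟩ := exists_walk_of_edist_ne_top (ne_top_of_le_ne_top (ENat.natCast_ne_top s) h)
  have hws : w.length ≤ s := by exact_mod_cast hw ▸ h
  have := w.apply_le_apply_add_length hf
  omega

end SimpleGraph

section CopsAndRobber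

variable {V : Type*} {G : SimpleGraph V} {k : ℕ}

lemma OneStepMove.edist_le_one {c c' : Fin k → V} (h : OneStepMove G c c') (i : Fin k) :
    G.edist (c i) (c' i) ≤ 1 :=
  edist_le_one_iff_adj_or_eq.2 ((h i).symm.imp id Eq.symm)

lemma Cap.exists_edist_le {T : Set (Fin k → V)} :
    ∀ {s : ℕ} {c : Fin k → V} {r : V}, Cap G T s c r → ∃ i, G.edist (c i) r ≤ s
  | 0, _, _, h => h.elim
  | s + 1, c, r, ⟨c', hmove, hcap⟩ => by
    have of_step : ∀ i, G.edist (c' i) r ≤ s → G.edist (c i) r ≤ ↑(s + 1) := fun i hi =>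
      calc G.edist (c i) r ≤ G.edist (c i) (c' i) + G.edist (c' i) r := G.edist_triangle
        _ ≤ 1 + s := add_le_add (hmove.edist_le_one i) hi
        _ = ↑(s + 1) := by push_cast; ring
    obtain ⟨⟨i, rfl⟩, -⟩ | hall := hcap
    · exact ⟨i, of_step i (by simp)⟩
    · -- let the robber stand still
      obtain ⟨⟨i, rfl⟩, -⟩ | hcap' := hall r (Or.inl rfl)
      · exact ⟨i, of_step i (by simp)⟩
      · obtain ⟨i, hi⟩ := hcap'.exists_edist_le
        exact ⟨i, of_step i hi⟩

open Classical in
theorem EternalWin.card_le_mul [Fintype V] {t B : ℕ} (h : EternalWin G k t)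
    (hball : ∀ v, #{u | G.edist v u ≤ t} ≤ B) : Fintype.card V ≤ k * B := by
  obtain ⟨T, ⟨c, hc⟩, hT⟩ := h
  have hcover : (univ : Finset V) ⊆ univ.biUnion fun i => {u | G.edist (c i) u ≤ t} := by
    intro r _
    obtain ⟨i, rfl⟩ | hcap := hT c hc r
    · simpa using ⟨i, by simp⟩
    · simpa using hcap.exists_edist_le
  calc Fintype.card V ≤ #(univ.biUnion fun i => {u | G.edist (c i) u ≤ t}) := card_le_card hcover
    _ ≤ #(univ : Finset (Fin k)) * B := card_biUnion_le_card_mul _ _ _ fun i _ => hball (c i)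
    _ = k * B := by simp

end CopsAndRobber

section PathProduct

variable {p : ℕ} {n : Fin p → ℕ}

lemma strongProdPi_pathGraph_eq_or_adj_iff {x y : ∀ i, Fin (n i)} :
    x = y ∨ (strongProdPi fun i => pathGraph (n i)).Adj x y ↔
      ∀ i, (x i : ℕ) ≤ y i + 1 ∧ (y i : ℕ) ≤ x i + 1 := by
  constructor
  · rintro (rfl | ⟨-, hadj⟩) i
    · omega
    · rcases hadj i with h | h
      · simp [h]
      · rw [pathGraph_adj] at h
        omega
  · intro h
    refine or_iff_not_imp_left.2 fun hne => ⟨hne, fun i => ?_⟩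
    rw [pathGraph_adj, Fin.ext_iff]
    have := h i
    omega

open Classical in
lemma card_edist_ball_strongProdPi_pathGraph_le (x : ∀ i, Fin (n i)) (t : ℕ) :
    #{y | (strongProdPi fun i => pathGraph (n i)).edist x y ≤ t} ≤ (2 * t + 1) ^ p := by
  set G := strongProdPi fun i => pathGraph (n i)
  have hcoord : ∀ i u v, G.Adj u v → (u i : ℕ) ≤ v i + 1 := fun i u v h =>
    (strongProdPi_pathGraph_eq_or_adj_iff.1 (Or.inr h) i).1
  let window : ∀ i, Finset (Fin (n i)) := fun i => {j | (x i : ℕ) ≤ j + t ∧ (j : ℕ) ≤ x i + t}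
  have hball : ({y | G.edist x y ≤ t} : Finset _) ⊆ Fintype.piFinset window := by
    intro y hy
    simp only [mem_filter, mem_univ, true_and] at hy
    simp only [Fintype.mem_piFinset, window, mem_filter, mem_univ, true_and]
    exact fun i => ⟨apply_le_apply_add_of_edist_le (hcoord i) hy,
      apply_le_apply_add_of_edist_le (hcoord i) (G.edist_comm ▸ hy)⟩
  have hwindow : ∀ i, #(window i) ≤ 2 * t + 1 := fun i =>
    calc #(window i) ≤ #(Icc ((x i : ℕ) - t) (x i + t)) :=
          card_le_card_of_injOn Fin.val (fun j hj => by simp [window] at hj ⊢; omega)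
            Fin.val_injective.injOn
      _ ≤ 2 * t + 1 := by simp only [Nat.card_Icc]; omega
  calc _ ≤ #(Fintype.piFinset window) := card_le_card hball
    _ = ∏ i, #(window i) := Fintype.card_piFinset window
    _ ≤ ∏ _i : Fin p, (2 * t + 1) := prod_le_prod' fun i _ => hwindow i
    _ = (2 * t + 1) ^ p := by simp

end PathProduct

section Chase

def stepToward (x z : ℕ) : ℕ :=
  if x < z then x + 1 else if z < x then x - 1 else x

def chase_s16 (a b x y : ℕ) : ℕ :=
  stepToward x (max a (min y b))

/-- A robber more than one step away from the cop can never get past it, so the cop only has to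
sweep the part of `[a, b]` on the robber's side. -/
def chasePotential (a b x y : ℕ) : ℕ :=
  if x ≤ y + 1 ∧ y ≤ x + 1 then 0 else if x < y then b - x else x - a

variable {a b x y n : ℕ}

lemma chase_lt (hx : x < n) (ha : a < n) (hb : b < n) : chase_s16 a b x y < n := by
  unfold chase_s16 stepToward; split_ifs <;> omega

lemma chase_mem_Icc (hx : x ∈ Set.Icc a b) : chase_s16 a b x y ∈ Set.Icc a b := by
  simp only [Set.mem_Icc] at hx ⊢; unfold chase_s16 stepToward; split_ifs <;> omega

lemma le_chase_add_one_and_chase_le_add_one : x ≤ chase_s16 a b x y + 1 ∧ chase_s16 a b x y ≤ x + 1 := by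
  unfold chase_s16 stepToward; split_ifs <;> omega

lemma chasePotential_le (hx : x ∈ Set.Icc a b) : chasePotential a b x y ≤ b - a := by
  simp only [Set.mem_Icc] at hx; unfold chasePotential; split_ifs <;> omega

lemma chase_eq_of_chasePotential_le_one (hx : x ∈ Set.Icc a b) (hy : y ∈ Set.Icc a b)
    (h : chasePotential a b x y ≤ 1) : chase_s16 a b x y = y := by
  simp only [Set.mem_Icc] at hx hy; unfold chasePotential at h; unfold chase_s16 stepToward
  split_ifs at * <;> omega

lemma chasePotential_chase_le {y' : ℕ} (hx : x ∈ Set.Icc a b) (hy : y ≤ y' + 1 ∧ y' ≤ y + 1) :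
    chasePotential a b (chase_s16 a b x y) y' ≤ chasePotential a b x y - 1 := by
  simp only [Set.mem_Icc] at hx; unfold chasePotential chase_s16 stepToward; split_ifs <;> omega

end Chase

section BoxStrategy

variable {p K : ℕ} {n : Fin p → ℕ} {lo hi : Fin K → ∀ i, Fin (n i)}

lemma mem_Icc_iff_val_mem_Icc {ι : Type*} {m : ι → ℕ} {x y z : ∀ i, Fin (m i)} :
    z ∈ Set.Icc x y ↔ ∀ i, (z i : ℕ) ∈ Set.Icc (x i : ℕ) (y i) := by
  simp only [Set.mem_Icc, Pi.le_def, Fin.le_iff_val_le_val, forall_and]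

lemma mem_Icc_iff_val_mem_Icc₂ {c : Fin K → ∀ i, Fin (n i)} :
    c ∈ Set.Icc lo hi ↔ ∀ a i, (c a i : ℕ) ∈ Set.Icc (lo a i : ℕ) (hi a i) := by
  simp only [Set.mem_Icc, Pi.le_def, Fin.le_iff_val_le_val, forall_and]

variable (lo hi) in
def chaseMove (c : Fin K → ∀ i, Fin (n i)) (r : ∀ i, Fin (n i)) : Fin K → ∀ i, Fin (n i) :=
  fun a i => ⟨chase_s16 (lo a i) (hi a i) (c a i) (r i), chase_lt (c a i).2 (lo a i).2 (hi a i).2⟩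

lemma chaseMove_mem_Icc {c : Fin K → ∀ i, Fin (n i)} (hc : c ∈ Set.Icc lo hi)
    (r : ∀ i, Fin (n i)) : chaseMove lo hi c r ∈ Set.Icc lo hi :=
  mem_Icc_iff_val_mem_Icc₂.2 fun a i => chase_mem_Icc (mem_Icc_iff_val_mem_Icc₂.1 hc a i)

lemma oneStepMove_chaseMove (c : Fin K → ∀ i, Fin (n i)) (r : ∀ i, Fin (n i)) :
    OneStepMove (strongProdPi fun i => pathGraph (n i)) c (chaseMove lo hi c r) := fun _ =>
  (strongProdPi_pathGraph_eq_or_adj_iff.2 fun _ => le_chase_add_one_and_chase_le_add_one).imp_left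
    Eq.symm

lemma cap_of_chasePotential_le (hcover : ∀ r, ∃ a, r ∈ Set.Icc (lo a) (hi a)) (s : ℕ)
    {c : Fin K → ∀ i, Fin (n i)} (hc : c ∈ Set.Icc lo hi) (r : ∀ i, Fin (n i))
    (hpot : ∀ a i, chasePotential (lo a i) (hi a i) (c a i) (r i) ≤ s + 1) :
    Cap (strongProdPi fun i => pathGraph (n i)) (Set.Icc lo hi) (s + 1) c r := by
  induction s generalizing c r with
  | zero =>
    obtain ⟨a, hr⟩ := hcover r
    refine ⟨chaseMove lo hi c r, oneStepMove_chaseMove c r,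
      Or.inl ⟨⟨a, funext fun i => Fin.ext ?_⟩, chaseMove_mem_Icc hc r⟩⟩
    exact chase_eq_of_chasePotential_le_one (mem_Icc_iff_val_mem_Icc₂.1 hc a i)
      (mem_Icc_iff_val_mem_Icc.1 hr i) (hpot a i)
  | succ s ih =>
    refine ⟨chaseMove lo hi c r, oneStepMove_chaseMove c r, Or.inr fun r' hr' =>
      Or.inr (ih (chaseMove_mem_Icc hc r) r' fun a i => ?_)⟩
    have hstep := strongProdPi_pathGraph_eq_or_adj_iff.1 (hr'.imp_left Eq.symm) i
    have := chasePotential_chase_le (mem_Icc_iff_val_mem_Icc₂.1 hc a i) hstep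
    have := hpot a i
    simp only [chaseMove]
    omega

theorem eternalWin_of_boxCover {t : ℕ} (ht : 0 < t) (hle : lo ≤ hi)
    (hdiam : ∀ a i, (hi a i : ℕ) ≤ lo a i + t) (hcover : ∀ r, ∃ a, r ∈ Set.Icc (lo a) (hi a)) :
    EternalWin (strongProdPi fun i => pathGraph (n i)) K t := by
  refine ⟨Set.Icc lo hi, Set.nonempty_Icc.2 hle, fun c hc r => Or.inr ?_⟩
  obtain ⟨s, rfl⟩ : ∃ s, t = s + 1 := ⟨t - 1, by omega⟩
  refine cap_of_chasePotential_le hcover s hc r fun a i => ?_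
  have := chasePotential_le (y := r i) (mem_Icc_iff_val_mem_Icc₂.1 hc a i)
  have := hdiam a i
  omega

end BoxStrategy

lemma lt_ceil_div_succ_iff {n t q : ℕ} : q < ⌈(n : ℚ) / (t + 1)⌉₊ ↔ (t + 1) * q < n := by
  rw [Nat.lt_ceil, lt_div_iff₀ (by positivity), mul_comm]
  exact_mod_cast Iff.rfl

theorem eternalWin_strongProdPi_pathGraph {p t : ℕ} (ht : 0 < t) (n : Fin p → ℕ) :
    EternalWin (strongProdPi fun i => pathGraph (n i)) (∏ i, ⌈(n i : ℚ) / (t + 1)⌉₊) t := by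
  set m := fun i => ⌈(n i : ℚ) / (t + 1)⌉₊
  let e : Fin (∏ i, m i) ≃ ∀ i, Fin (m i) := finPiFinEquiv.symm
  let lo : Fin (∏ i, m i) → ∀ i, Fin (n i) := fun a i =>
    ⟨(t + 1) * e a i, lt_ceil_div_succ_iff.1 (e a i).2⟩
  let hi : Fin (∏ i, m i) → ∀ i, Fin (n i) := fun a i =>
    ⟨min ((t + 1) * e a i + t) (n i - 1), by have := (lo a i).2; omega⟩
  refine eternalWin_of_boxCover (lo := lo) (hi := hi) ht (fun a i => ?_) (fun a i => ?_) fun r => ?_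
  · have : (t + 1) * (e a i : ℕ) < n i := (lo a i).2
    simp only [Fin.le_iff_val_le_val, lo, hi]
    omega
  · exact min_le_left _ _
  · let box : ∀ i, Fin (m i) := fun i =>
      ⟨r i / (t + 1), lt_ceil_div_succ_iff.2 (lt_of_le_of_lt (Nat.mul_div_le _ _) (r i).2)⟩
    refine ⟨e.symm box, mem_Icc_iff_val_mem_Icc.2 fun i => ?_⟩
    have := Nat.div_add_mod (r i) (t + 1)
    have := Nat.mod_lt (r i) (show t + 1 > 0 by omega)
    have := (r i).2
    simp only [lo, hi, Equiv.apply_symm_apply, box, Set.mem_Icc]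
    omega

section EternalCopNumber

variable {V : Type*} {G : SimpleGraph V} {k t : ℕ}

lemma eternalCopNumber_le (hk : 1 ≤ k) (h : EternalWin G k t) : eternalCopNumber G t ≤ k :=
  Nat.sInf_le ⟨hk, h⟩

lemma eternalWin_eternalCopNumber (hk : 1 ≤ k) (h : EternalWin G k t) :
    EternalWin G (eternalCopNumber G t) t :=
  (Nat.sInf_mem (s := {k | 1 ≤ k ∧ EternalWin G k t}) ⟨k, hk, h⟩).2

end EternalCopNumber

theorem eternalCopNumber_strongProd_paths_general (p t : ℕ) (ht : 1 ≤ t)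
    (n : Fin p → ℕ) (hn : ∀ i, 1 ≤ n i) :
    (∏ i, (n i : ℚ)) / (2 * t + 1) ^ p
        ≤ (eternalCopNumber (strongProdPi fun i => SimpleGraph.pathGraph (n i)) t : ℚ) ∧
      eternalCopNumber (strongProdPi fun i => SimpleGraph.pathGraph (n i)) t
        ≤ ∏ i, ⌈(n i : ℚ) / (t + 1)⌉₊ := by
  have hK : 1 ≤ ∏ i, ⌈(n i : ℚ) / (t + 1)⌉₊ :=
    one_le_prod' fun i _ => (lt_ceil_div_succ_iff (q := 0)).2 (by rw [mul_zero]; exact hn i)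
  have hwin := eternalWin_strongProdPi_pathGraph ht n
  refine ⟨?_, eternalCopNumber_le hK hwin⟩
  have hcard := (eternalWin_eternalCopNumber hK hwin).card_le_mul
    (card_edist_ball_strongProdPi_pathGraph_le · t)
  simp only [Fintype.card_pi, Fintype.card_fin] at hcard
  rw [div_le_iff₀ (by positivity)]
  exact_mod_cast hcard

/-- bounds for the eternal cop number of a strong product of paths. -/
theorem eternalCopNumber_strongProd_paths (p t : ℕ) (hp : 1 ≤ p) (ht : 1 ≤ t)
    (n : Fin p → ℕ) (hn : ∀ i, 1 ≤ n i) :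
    (∏ i, (n i : ℚ)) / (2 * t + 1) ^ p
        ≤ (eternalCopNumber (strongProdPi fun i => SimpleGraph.pathGraph (n i)) t : ℚ) ∧
      eternalCopNumber (strongProdPi fun i => SimpleGraph.pathGraph (n i)) t
        ≤ ∏ i, ⌈(n i : ℚ) / (t + 1)⌉₊ :=
  eternalCopNumber_strongProd_paths_general p t ht n hn
end
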